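/- arXiv:2311.08715 — 3 statements merged into one kernel-verified Lean document; each statement's English description precedes it below -/
import Mathlib

section
/- Let r_c > 0 and R > r_c, let p ∈ ℝ² with ‖p‖ = R, and let X be uniformly distributed on the closed disk of radius r_c centered at the origin. Then for every t with R − r_c ≤ t ≤ R + r_c, the probability that ‖X − p‖ ≤ t equals ∫_{R−r_c}^{t} (2r/(π r_c²)) · arccos((R² + r² − r_c²)/(2 R r)) dr. Equivalently, the distance ‖X − p‖ has probability density f(r) = (2r/(π r_c²)) · arccos((R² + r² − r_c²)/(2 R r)) on the interval (R − r_c, R + r_c) and density 0 elsewhere. (Paper's Lemma 1, case R_{c2u} > r_c.) -/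
/-!
An isometry `ℝ² ≃ ℂ` followed by a translation sends `p` to `0` and the centre of the disk to
the real point `R`, so the event `‖X - p‖ ≤ t` becomes the lens `closedBall 0 t ∩ closedBall R r_c`.
In polar coordinates about `0`, the law of cosines shows that the circle of radius `r` meets
`closedBall R r_c` in the arc `cos θ ≥ (R² + r² - r_c²) / (2 R r)`, of length
`2 arccos ((R² + r² - r_c²) / (2 R r))`; integrating `r` times this length gives the area of the
lens, and the integrand vanishes for `r ≤ R - r_c`, where the circle misses the disk.
-/

open MeasureTheory Real Set Metric

/-- No restriction on `c` is needed, since `arccos` is clamped to `[0, π]` outside `[-1, 1]`. -/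
theorem Real.volume_sep_Ioo_le_cos (c : ℝ) :
    volume {θ ∈ Ioo (-π) π | c ≤ cos θ} = ENNReal.ofReal (2 * arccos c) := by
  set a := arccos c
  have hsub : Ioo (-a) a ⊆ {θ ∈ Ioo (-π) π | c ≤ cos θ} := by
    intro θ hθ
    have habs : |θ| < a := abs_lt.2 hθ
    have hπ : |θ| < π := habs.trans_le (arccos_le_pi c)
    refine ⟨abs_lt.1 hπ, not_lt.1 fun hlt => habs.not_ge ?_⟩
    rw [← arccos_cos (abs_nonneg θ) hπ.le, cos_abs]
    exact arccos_le_arccos hlt.le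
  have hsup : {θ ∈ Ioo (-π) π | c ≤ cos θ} ⊆ Icc (-a) a := by
    rintro θ ⟨hθ, hc⟩
    rw [mem_Icc, ← abs_le, ← arccos_cos (abs_nonneg θ) (abs_lt.2 hθ).le, cos_abs]
    exact arccos_le_arccos hc
  refine le_antisymm ((measure_mono hsup).trans_eq ?_) ((measure_mono hsub).trans_eq' ?_) <;>
    simp only [volume_Icc, volume_Ioo] <;> ring_nf

theorem Complex.measurable_polarCoord_symm : Measurable Complex.polarCoord.symm :=
  measurableEquivRealProd.symm.measurable.comp continuous_polarCoord_symm.measurable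

theorem Complex.volume_eq_lintegral_polarCoord {S : Set ℂ} (hS : MeasurableSet S) :
    volume S = ∫⁻ r in Ioi 0,
      ENNReal.ofReal r * volume {θ ∈ Ioo (-π) π | Complex.polarCoord.symm (r, θ) ∈ S} := by
  have hmeas : Measurable fun q : ℝ × ℝ =>
      S.indicator (1 : ℂ → ENNReal) (Complex.polarCoord.symm q) :=
    (measurable_one.indicator hS).comp Complex.measurable_polarCoord_symm
  rw [← lintegral_indicator_one hS, ← Complex.lintegral_comp_polarCoord_symm, polarCoord_target,
    Measure.volume_eq_prod, ← Measure.prod_restrict, lintegral_prod _ ?_]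
  · refine setLIntegral_congr_fun measurableSet_Ioi fun r _ => ?_
    have hmeas_slice : MeasurableSet ((fun θ => Complex.polarCoord.symm (r, θ)) ⁻¹' S) :=
      hS.preimage (Complex.measurable_polarCoord_symm.comp measurable_prodMk_left)
    simp only [smul_eq_mul]
    rw [lintegral_const_mul' _ _ ENNReal.ofReal_ne_top]
    simp_rw [← indicator_comp_right (fun θ => Complex.polarCoord.symm (r, θ))]
    rw [Pi.one_comp, lintegral_indicator_one hmeas_slice, Measure.restrict_apply hmeas_slice,
      inter_comm]
    rfl
  · exact (measurable_fst.ennreal_ofReal.mul hmeas).aemeasurable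

theorem Complex.norm_polarCoord_symm_sub_ofReal_sq (r θ R : ℝ) :
    ‖Complex.polarCoord.symm (r, θ) - R‖ ^ 2 = r ^ 2 - 2 * R * r * Real.cos θ + R ^ 2 := by
  rw [Complex.sq_norm, Complex.normSq_apply]
  simp only [Complex.polarCoord_symm_apply, Complex.sub_re, Complex.sub_im, Complex.mul_re,
    Complex.mul_im, Complex.add_re, Complex.add_im, Complex.ofReal_re, Complex.ofReal_im,
    Complex.I_re, Complex.I_im]
  linear_combination r ^ 2 * Real.sin_sq_add_cos_sq θ

theorem Complex.polarCoord_symm_mem_closedBall_ofReal_iff {r θ R ρ : ℝ} (hr : 0 < r)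
    (hR : 0 < R) (hρ : 0 ≤ ρ) :
    Complex.polarCoord.symm (r, θ) ∈ closedBall (R : ℂ) ρ ↔
      (R ^ 2 + r ^ 2 - ρ ^ 2) / (2 * R * r) ≤ Real.cos θ := by
  rw [mem_closedBall, dist_eq_norm, ← sq_le_sq₀ (norm_nonneg _) hρ,
    Complex.norm_polarCoord_symm_sub_ofReal_sq, div_le_iff₀ (by positivity)]
  constructor <;> intro h <;> linarith

theorem Complex.volume_closedBall_zero_inter_closedBall_ofReal_eq_lintegral {R ρ t : ℝ}
    (hR : 0 < R) (hρ : 0 ≤ ρ) :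
    volume (closedBall (0 : ℂ) t ∩ closedBall (R : ℂ) ρ) =
      ∫⁻ r in Ioc 0 t,
        ENNReal.ofReal (2 * r * Real.arccos ((R ^ 2 + r ^ 2 - ρ ^ 2) / (2 * R * r))) := by
  rw [Complex.volume_eq_lintegral_polarCoord
      (isClosed_closedBall.inter isClosed_closedBall).measurableSet,
    ← Ioi_inter_Iic, inter_comm (Ioi _), ← setLIntegral_indicator measurableSet_Iic]
  refine setLIntegral_congr_fun measurableSet_Ioi fun r (hr : 0 < r) => ?_
  have hslice : {θ ∈ Ioo (-π) π | Complex.polarCoord.symm (r, θ) ∈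
      closedBall (0 : ℂ) t ∩ closedBall (R : ℂ) ρ} =
      if r ≤ t then {θ ∈ Ioo (-π) π | (R ^ 2 + r ^ 2 - ρ ^ 2) / (2 * R * r) ≤ Real.cos θ}
      else ∅ := by
    ext θ
    simp only [mem_inter_iff, Complex.polarCoord_symm_mem_closedBall_ofReal_iff hr hR hρ,
      mem_closedBall_zero_iff, Complex.norm_polarCoord_symm, abs_of_pos hr]
    split_ifs with h <;> simp [h]
  rw [hslice]
  split_ifs with h
  · rw [indicator_of_mem (show r ∈ Iic t from h), Real.volume_sep_Ioo_le_cos,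
      ← ENNReal.ofReal_mul hr.le]
    ring_nf
  · rw [indicator_of_notMem (show r ∉ Iic t from h), measure_empty, mul_zero]

theorem Complex.volume_closedBall_zero_inter_closedBall_ofReal_eq_integral {R ρ t : ℝ}
    (hρ : 0 ≤ ρ) (hR : ρ < R) (ht : R - ρ ≤ t) :
    volume (closedBall (0 : ℂ) t ∩ closedBall (R : ℂ) ρ) =
      ENNReal.ofReal (∫ r in (R - ρ)..t,
        2 * r * Real.arccos ((R ^ 2 + r ^ 2 - ρ ^ 2) / (2 * R * r))) := by
  set g : ℝ → ℝ := fun r => 2 * r * Real.arccos ((R ^ 2 + r ^ 2 - ρ ^ 2) / (2 * R * r))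
  have hRρ : 0 < R - ρ := sub_pos.2 hR
  have hR0 : 0 < R := hρ.trans_lt hR
  have hg_zero : ∀ r ∈ Ioc 0 (R - ρ), ENNReal.ofReal (g r) = 0 := fun r ⟨hr, hrR⟩ => by
    have : 1 ≤ (R ^ 2 + r ^ 2 - ρ ^ 2) / (2 * R * r) := by
      rw [one_le_div (by positivity)]
      nlinarith
    simp [g, Real.arccos_eq_zero.2 this]
  have hg_cont : ContinuousOn g (Icc (R - ρ) t) := by
    have : ∀ r ∈ Icc (R - ρ) t, 2 * R * r ≠ 0 := fun r hr => by
      have := hRρ.trans_le hr.1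
      positivity
    fun_prop (disch := assumption)
  rw [Complex.volume_closedBall_zero_inter_closedBall_ofReal_eq_lintegral hR0 hρ,
    ← Ioc_union_Ioc_eq_Ioc hRρ.le ht,
    lintegral_union measurableSet_Ioc (Ioc_disjoint_Ioc_of_le le_rfl),
    setLIntegral_congr_fun measurableSet_Ioc hg_zero, lintegral_zero, zero_add,
    intervalIntegral.integral_of_le ht, ofReal_integral_eq_lintegral_ofReal]
  · exact hg_cont.integrableOn_Icc.mono_set Ioc_subset_Icc_self
  · refine (ae_restrict_mem measurableSet_Ioc).mono fun r hr => ?_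
    have := hRρ.trans hr.1
    exact mul_nonneg (by positivity) (Real.arccos_nonneg _)

theorem EuclideanSpace.exists_linearIsometryEquiv_complex_apply_eq_norm
    (v : EuclideanSpace ℝ (Fin 2)) :
    ∃ e : EuclideanSpace ℝ (Fin 2) ≃ₗᵢ[ℝ] ℂ, e v = ‖v‖ := by
  set e₀ : EuclideanSpace ℝ (Fin 2) ≃ₗᵢ[ℝ] ℂ := Complex.orthonormalBasisOneI.repr.symm
  refine ⟨e₀.trans (rotation (Circle.exp (-Complex.arg (e₀ v)))), ?_⟩
  rw [LinearIsometryEquiv.trans_apply, rotation_apply, Circle.coe_exp, ← e₀.norm_map v]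
  conv_lhs => rhs; rw [← Complex.norm_mul_exp_arg_mul_I (e₀ v)]
  rw [mul_left_comm, ← Complex.exp_add]
  push_cast
  ring_nf
  simp

theorem EuclideanSpace.volume_closedBall_inter_closedBall_zero_eq_complex
    (p : EuclideanSpace ℝ (Fin 2)) (t ρ : ℝ) :
    volume (closedBall p t ∩ closedBall 0 ρ) =
      volume (closedBall (0 : ℂ) t ∩ closedBall (‖p‖ : ℂ) ρ) := by
  obtain ⟨e, he⟩ := EuclideanSpace.exists_linearIsometryEquiv_complex_apply_eq_norm (-p)
  rw [norm_neg] at he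
  have hpre : (fun x => e x + ‖p‖) ⁻¹' (closedBall (0 : ℂ) t ∩ closedBall (‖p‖ : ℂ) ρ) =
      closedBall p t ∩ closedBall 0 ρ := by
    ext x
    simp only [mem_preimage, mem_inter_iff, mem_closedBall, dist_eq_norm, sub_zero]
    rw [add_sub_cancel_right, e.norm_map, ← he, ← map_add, ← sub_eq_add_neg, e.norm_map]
  rw [← hpre]
  exact ((measurePreserving_add_right volume _).comp e.measurePreserving).measure_preimage
    (isClosed_closedBall.inter isClosed_closedBall).measurableSet.nullMeasurableSet

/-- Paper's Lemma 1, case `R > r_c`: for a point `X` uniformly distributed on the closed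
disk of radius `r_c` centered at the origin of `ℝ²`, and a point `p` at distance `R > r_c`
from the origin, the CDF of the distance `‖X - p‖` on `[R - r_c, R + r_c]` is given by the
integral of the density `f(r) = (2r/(π r_c²)) · arccos((R² + r² − r_c²)/(2 R r))`. -/
theorem lemma1_case_R_gt_rc (r_c R : ℝ) (hrc : 0 < r_c) (hR : r_c < R)
    (p : EuclideanSpace ℝ (Fin 2)) (hp : ‖p‖ = R)
    (μ : Measure (EuclideanSpace ℝ (Fin 2)))
    (hμ : μ = (ENNReal.ofReal (π * r_c ^ 2))⁻¹ •
      (volume.restrict (Metric.closedBall (0 : EuclideanSpace ℝ (Fin 2)) r_c))) :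
    ∀ t : ℝ, R - r_c ≤ t → t ≤ R + r_c →
      μ {x | ‖x - p‖ ≤ t} =
        ENNReal.ofReal
          (∫ r in (R - r_c)..t,
            (2 * r / (π * r_c ^ 2)) * Real.arccos ((R ^ 2 + r ^ 2 - r_c ^ 2) / (2 * R * r))) := by
  intro t ht _
  have hball : {x | ‖x - p‖ ≤ t} = closedBall p t := by
    ext x
    rw [mem_closedBall, dist_eq_norm, mem_ofPred_eq]
  have harea : 0 < π * r_c ^ 2 := by positivity
  rw [hμ, hball, Measure.smul_apply, Measure.restrict_apply isClosed_closedBall.measurableSet,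
    EuclideanSpace.volume_closedBall_inter_closedBall_zero_eq_complex, hp,
    Complex.volume_closedBall_zero_inter_closedBall_ofReal_eq_integral hrc.le hR ht, smul_eq_mul,
    ← ENNReal.ofReal_inv_of_pos harea, ← ENNReal.ofReal_mul (inv_nonneg.2 harea.le),
    ← intervalIntegral.integral_const_mul]
  congr 2 with r
  ring
end

section
/- For all real numbers r_c, R with 0 < r_c < R, ∫_{R−r_c}^{R+r_c} 2r · arccos((R² + r² − r_c²)/(2 R r)) dr = π r_c². (Normalization of the density in the paper's Lemma 1, case R > r_c: the stated probability density function integrates to 1 over its support.) -/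
/-!
In polar coordinates, `2 r · arccos((R² + r² − r_c²)/(2 R r))` is the length of the arc of the
circle of radius `r` about the origin lying inside the disc of radius `r_c` centred at distance `R`,
so the integral is the area `π r_c²` of that disc. Correspondingly, an antiderivative is a lens
area minus `π r_c² / 2`, which takes the values `∓π r_c² / 2` at the endpoints `R ∓ r_c`.
-/

open Real Set

namespace Lens

variable {R ρ y : ℝ}

/-- Sixteen times the squared area of a triangle with sides `R`, `ρ`, `y` (Heron's formula). -/
def heron (R ρ y : ℝ) : ℝ := 4 * R ^ 2 * y ^ 2 - (y ^ 2 + R ^ 2 - ρ ^ 2) ^ 2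

theorem heron_pos (hR : ρ < R) (hy : y ∈ Ioo (R - ρ) (R + ρ)) : 0 < heron R ρ y := by
  obtain ⟨hy₁, hy₂⟩ := hy
  have factor : heron R ρ y = (ρ ^ 2 - (y - R) ^ 2) * ((y + R) ^ 2 - ρ ^ 2) := by
    unfold heron; ring
  rw [factor]
  apply mul_pos <;> nlinarith

theorem one_sub_sq_cos_angle (hR : R ≠ 0) (hy : y ≠ 0) :
    1 - ((R ^ 2 + y ^ 2 - ρ ^ 2) / (2 * R * y)) ^ 2 = heron R ρ y / (2 * R * y) ^ 2 := by
  unfold heron; field_simp; ring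

theorem one_sub_sq_sin_angle (hR : R ≠ 0) (hρ : ρ ≠ 0) :
    1 - ((y ^ 2 - R ^ 2 - ρ ^ 2) / (2 * R * ρ)) ^ 2 = heron R ρ y / (2 * R * ρ) ^ 2 := by
  unfold heron; field_simp; ring

theorem sqrt_one_sub_sq_of_eq_div {a d Q : ℝ} (hd : 0 < d) (ha : 1 - a ^ 2 = Q / d ^ 2) :
    √(1 - a ^ 2) = √Q / d := by
  rw [ha, sqrt_div' _ (sq_nonneg d), sqrt_sq hd.le]

theorem abs_lt_one_of_eq_div {a d Q : ℝ} (hd : 0 < d) (hQ : 0 < Q)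
    (ha : 1 - a ^ 2 = Q / d ^ 2) : |a| < 1 := by
  have : 0 < 1 - a ^ 2 := ha ▸ by positivity
  rw [← sq_lt_one_iff_abs_lt_one]; linarith

theorem hasDerivAt_arccos_cos_angle (hR : 0 < R) (hy : 0 < y) (hQ : 0 < heron R ρ y) :
    HasDerivAt (fun y => arccos ((R ^ 2 + y ^ 2 - ρ ^ 2) / (2 * R * y)))
      (-(y ^ 2 - R ^ 2 + ρ ^ 2) / (y * √(heron R ρ y))) y := by
  have hsq := one_sub_sq_cos_angle (ρ := ρ) hR.ne' hy.ne'
  have habs := abs_lt_one_of_eq_div (by positivity) hQ hsq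
  have hinner : HasDerivAt (fun y => (R ^ 2 + y ^ 2 - ρ ^ 2) / (2 * R * y))
      ((2 * y * (2 * R * y) - (R ^ 2 + y ^ 2 - ρ ^ 2) * (2 * R)) / (2 * R * y) ^ 2) y := by
    refine HasDerivAt.div ?_ ?_ (by positivity)
    · simpa using ((hasDerivAt_pow 2 y).const_add (R ^ 2)).sub_const (ρ ^ 2)
    · simpa using (hasDerivAt_id y).const_mul (2 * R)
  refine ((hasDerivAt_arccos (abs_lt.mp habs).1.ne' (abs_lt.mp habs).2.ne).comp y
    hinner).congr_deriv ?_
  rw [sqrt_one_sub_sq_of_eq_div (by positivity) hsq]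
  have : 0 < √(heron R ρ y) := sqrt_pos.mpr hQ
  field_simp
  ring

theorem hasDerivAt_arcsin_sin_angle (hR : 0 < R) (hρ : 0 < ρ) (hQ : 0 < heron R ρ y) :
    HasDerivAt (fun y => arcsin ((y ^ 2 - R ^ 2 - ρ ^ 2) / (2 * R * ρ)))
      (2 * y / √(heron R ρ y)) y := by
  have hsq := one_sub_sq_sin_angle (y := y) hR.ne' hρ.ne'
  have habs := abs_lt_one_of_eq_div (by positivity) hQ hsq
  have hinner : HasDerivAt (fun y => (y ^ 2 - R ^ 2 - ρ ^ 2) / (2 * R * ρ))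
      (2 * y / (2 * R * ρ)) y := by
    simpa using (((hasDerivAt_pow 2 y).sub_const (R ^ 2)).sub_const (ρ ^ 2)).div_const _
  refine ((hasDerivAt_arcsin (abs_lt.mp habs).1.ne' (abs_lt.mp habs).2.ne).comp y
    hinner).congr_deriv ?_
  rw [sqrt_one_sub_sq_of_eq_div (by positivity) hsq]
  have : 0 < √(heron R ρ y) := sqrt_pos.mpr hQ
  field_simp

theorem hasDerivAt_sqrt_heron (hQ : 0 < heron R ρ y) :
    HasDerivAt (fun y => √(heron R ρ y))
      (2 * y * (R ^ 2 - y ^ 2 + ρ ^ 2) / √(heron R ρ y)) y := by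
  have hderiv : HasDerivAt (heron R ρ) (8 * R ^ 2 * y - 4 * y * (y ^ 2 + R ^ 2 - ρ ^ 2)) y := by
    have := ((hasDerivAt_pow 2 y).const_mul (4 * R ^ 2)).sub
      ((((hasDerivAt_pow 2 y).add_const (R ^ 2)).sub_const (ρ ^ 2)).pow 2)
    refine this.congr_deriv ?_
    push_cast; ring
  refine ((hasDerivAt_sqrt hQ.ne').comp y hderiv).congr_deriv ?_
  have : 0 < √(heron R ρ y) := sqrt_pos.mpr hQ
  field_simp
  ring

/-- The area of the lens `{|z| ≤ y} ∩ {|z - R| ≤ ρ}`, minus `π ρ² / 2`. -/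
noncomputable def areaAntideriv (R ρ y : ℝ) : ℝ :=
  y ^ 2 * arccos ((R ^ 2 + y ^ 2 - ρ ^ 2) / (2 * R * y)) - √(heron R ρ y) / 2
    + ρ ^ 2 * arcsin ((y ^ 2 - R ^ 2 - ρ ^ 2) / (2 * R * ρ))

theorem hasDerivAt_areaAntideriv (hR : 0 < R) (hρ : 0 < ρ) (hy : 0 < y)
    (hQ : 0 < heron R ρ y) :
    HasDerivAt (areaAntideriv R ρ) (2 * y * arccos ((R ^ 2 + y ^ 2 - ρ ^ 2) / (2 * R * y))) y := by
  have hsum := ((((hasDerivAt_pow 2 y).mul (hasDerivAt_arccos_cos_angle hR hy hQ)).sub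
    ((hasDerivAt_sqrt_heron hQ).div_const 2)).add
    ((hasDerivAt_arcsin_sin_angle hR hρ hQ).const_mul (ρ ^ 2)))
  refine hsum.congr_deriv ?_
  have : 0 < √(heron R ρ y) := sqrt_pos.mpr hQ
  push_cast
  field_simp
  ring

theorem continuousOn_arccos_cos_angle (hR : 0 < R) {s : Set ℝ} (hs : ∀ y ∈ s, 0 < y) :
    ContinuousOn (fun y => arccos ((R ^ 2 + y ^ 2 - ρ ^ 2) / (2 * R * y))) s :=
  continuous_arccos.comp_continuousOn <|
    ContinuousOn.div (by fun_prop) (by fun_prop) fun y hy => by have := hs y hy; positivity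

theorem continuousOn_areaAntideriv (hR : 0 < R) {s : Set ℝ} (hs : ∀ y ∈ s, 0 < y) :
    ContinuousOn (areaAntideriv R ρ) s := by
  unfold areaAntideriv heron
  have harcsin : Continuous fun y : ℝ => arcsin ((y ^ 2 - R ^ 2 - ρ ^ 2) / (2 * R * ρ)) :=
    continuous_arcsin.comp (by fun_prop)
  exact (((continuousOn_pow 2).mul (continuousOn_arccos_cos_angle hR hs)).sub
    (by fun_prop)).add (by fun_prop)

theorem areaAntideriv_add_radius (hR : 0 < R) (hρ : 0 < ρ) :
    areaAntideriv R ρ (R + ρ) = ρ ^ 2 * (π / 2) := by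
  have hcos : (R ^ 2 + (R + ρ) ^ 2 - ρ ^ 2) / (2 * R * (R + ρ)) = 1 := by
    rw [div_eq_one_iff_eq (by positivity)]; ring
  have hsin : ((R + ρ) ^ 2 - R ^ 2 - ρ ^ 2) / (2 * R * ρ) = 1 := by
    rw [div_eq_one_iff_eq (by positivity)]; ring
  have hheron : heron R ρ (R + ρ) = 0 := by unfold heron; ring
  simp [areaAntideriv, hcos, hsin, hheron]

theorem areaAntideriv_sub_radius (hρ : 0 < ρ) (hR : ρ < R) :
    areaAntideriv R ρ (R - ρ) = -(ρ ^ 2 * (π / 2)) := by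
  have hR₀ : 0 < R := hρ.trans hR
  have hcos : (R ^ 2 + (R - ρ) ^ 2 - ρ ^ 2) / (2 * R * (R - ρ)) = 1 := by
    rw [div_eq_one_iff_eq (mul_pos (by positivity) (sub_pos.mpr hR)).ne']; ring
  have hsin : ((R - ρ) ^ 2 - R ^ 2 - ρ ^ 2) / (2 * R * ρ) = -1 := by
    rw [div_eq_iff (by positivity)]; ring
  have hheron : heron R ρ (R - ρ) = 0 := by unfold heron; ring
  simp [areaAntideriv, hcos, hsin, hheron]

end Lens

open Lens

/-- Normalization of the density in the paper's Lemma 1, case `R > r_c`: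
`∫_{R−r_c}^{R+r_c} 2r · arccos((R² + r² − r_c²)/(2 R r)) dr = π r_c²`. -/
theorem lemma1_density_normalization_R_gt_rc (r_c R : ℝ) (hrc : 0 < r_c) (hR : r_c < R) :
    ∫ r in (R - r_c)..(R + r_c),
      2 * r * Real.arccos ((R ^ 2 + r ^ 2 - r_c ^ 2) / (2 * R * r)) = π * r_c ^ 2 := by
  have hR₀ : 0 < R := hrc.trans hR
  have hle : R - r_c ≤ R + r_c := by linarith
  have hpos : ∀ y ∈ Icc (R - r_c) (R + r_c), 0 < y := fun y hy => by linarith [hy.1]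
  have hint : IntervalIntegrable
      (fun r => 2 * r * arccos ((R ^ 2 + r ^ 2 - r_c ^ 2) / (2 * R * r))) MeasureTheory.volume
      (R - r_c) (R + r_c) := by
    refine ContinuousOn.intervalIntegrable ?_
    rw [uIcc_of_le hle]
    exact (continuousOn_const.mul continuousOn_id).mul (continuousOn_arccos_cos_angle hR₀ hpos)
  rw [intervalIntegral.integral_eq_sub_of_hasDerivAt_of_le hle
      (continuousOn_areaAntideriv hR₀ hpos)
      (fun y hy => hasDerivAt_areaAntideriv hR₀ hrc (hpos y (Ioo_subset_Icc_self hy))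
        (heron_pos hR hy)) hint,
    areaAntideriv_add_radius hR₀ hrc, areaAntideriv_sub_radius hrc hR]
  ring
end

section
/- For all real numbers r_c, R with 0 < R ≤ r_c, ∫_{r_c−R}^{R+r_c} 2r · arccos((R² + r² − r_c²)/(2 R r)) dr = π r_c² − π (r_c − R)². (Normalization of the density in the paper's Lemma 1, case R ≤ r_c: together with the inner part ∫_0^{r_c−R} (2r/r_c²) dr = (r_c−R)²/r_c², the stated piecewise density integrates to 1.) -/
/-!
In polar coordinates about a point at distance `R` from the centre of a disc of radius `r_c`, the
circle of radius `r` meets the disc in an arc of length `2 r arccos ((R² + r² - r_c²) / (2 R r))`;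
the integral is therefore the area of the disc minus that of the inner disc of radius `r_c - R`,
which it contains entirely. Formally, `t² arccos u - √g / 2 + r_c² arcsin v` is a primitive,
where `u` is the cosine-law quotient above, `v = (t² - R² - r_c²) / (2 R r_c)` and
`g = (2 R t)² - (R² + t² - r_c²)²` is Heron's product for the triangle with sides `R, t, r_c`
(so `1 - u² = g / (2 R t)²` and `1 - v² = g / (2 R r_c)²`). It is continuous on the closed
interval, so the fundamental theorem of calculus applies directly.
-/

open Real Set

lemma sqrt_one_sub_div_sq {x c : ℝ} (hc : 0 < c) : √(1 - (x / c) ^ 2) = √(c ^ 2 - x ^ 2) / c := by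
  rw [show 1 - (x / c) ^ 2 = (c ^ 2 - x ^ 2) / c ^ 2 by field_simp, sqrt_div' _ (sq_nonneg c),
    sqrt_sq hc.le]

lemma div_ne_neg_one_and_ne_one_of_sq_lt_sq {x c : ℝ} (hc : 0 < c) (h : x ^ 2 < c ^ 2) :
    x / c ≠ -1 ∧ x / c ≠ 1 := by
  obtain ⟨hlo, hhi⟩ := abs_lt_of_sq_lt_sq' h hc.le
  constructor
  · rw [ne_eq, div_eq_iff hc.ne']; linarith
  · rw [ne_eq, div_eq_iff hc.ne']; linarith

section ChainRule

variable {f g : ℝ → ℝ} {f' g' t : ℝ}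

lemma HasDerivAt.arccos_div (hf : HasDerivAt f f' t) (hg : HasDerivAt g g' t) (hc : 0 < g t)
    (h : f t ^ 2 < g t ^ 2) :
    HasDerivAt (fun s => arccos (f s / g s))
      (-(f' * g t - f t * g') / (g t * √(g t ^ 2 - f t ^ 2))) t := by
  obtain ⟨hne₁, hne₂⟩ := div_ne_neg_one_and_ne_one_of_sq_lt_sq hc h
  refine ((hasDerivAt_arccos hne₁ hne₂).comp t (hf.div hg hc.ne')).congr_deriv ?_
  rw [sqrt_one_sub_div_sq hc]
  field_simp

lemma HasDerivAt.arcsin_div (hf : HasDerivAt f f' t) (hg : HasDerivAt g g' t) (hc : 0 < g t)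
    (h : f t ^ 2 < g t ^ 2) :
    HasDerivAt (fun s => arcsin (f s / g s))
      ((f' * g t - f t * g') / (g t * √(g t ^ 2 - f t ^ 2))) t := by
  obtain ⟨hne₁, hne₂⟩ := div_ne_neg_one_and_ne_one_of_sq_lt_sq hc h
  refine ((hasDerivAt_arcsin hne₁ hne₂).comp t (hf.div hg hc.ne')).congr_deriv ?_
  rw [sqrt_one_sub_div_sq hc]
  field_simp

end ChainRule

noncomputable def arcLengthPrimitive (r_c R t : ℝ) : ℝ :=
  t ^ 2 * arccos ((R ^ 2 + t ^ 2 - r_c ^ 2) / (2 * R * t))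
    - √((2 * R * t) ^ 2 - (R ^ 2 + t ^ 2 - r_c ^ 2) ^ 2) / 2
    + r_c ^ 2 * arcsin ((t ^ 2 - R ^ 2 - r_c ^ 2) / (2 * R * r_c))

lemma heron_pos {r_c R t : ℝ} (h₁ : |r_c - R| < t) (h₂ : t < R + r_c) :
    0 < (2 * R * t) ^ 2 - (R ^ 2 + t ^ 2 - r_c ^ 2) ^ 2 := by
  obtain ⟨h₃, h₄⟩ := abs_lt.1 h₁
  have hfactor : (2 * R * t) ^ 2 - (R ^ 2 + t ^ 2 - r_c ^ 2) ^ 2 =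
      (R + r_c - t) * (t + r_c - R) * (t + R - r_c) * (t + R + r_c) := by ring
  rw [hfactor]
  apply_rules [mul_pos] <;> linarith

lemma hasDerivAt_arcLengthPrimitive {r_c R t : ℝ} (hR0 : 0 < R) (hR : R ≤ r_c)
    (ht : t ∈ Ioo (r_c - R) (R + r_c)) :
    HasDerivAt (arcLengthPrimitive r_c R)
      (2 * t * arccos ((R ^ 2 + t ^ 2 - r_c ^ 2) / (2 * R * t))) t := by
  obtain ⟨ht₁, ht₂⟩ := ht
  have ht0 : 0 < t := by linarith
  have hrc : 0 < r_c := by linarith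
  have hheron := heron_pos (by rwa [abs_of_nonneg (sub_nonneg.2 hR)]) ht₂
  have hsq : HasDerivAt (fun s : ℝ => s ^ 2) (2 * t) t := by simpa using hasDerivAt_pow 2 t
  have hX : HasDerivAt (fun s => R ^ 2 + s ^ 2 - r_c ^ 2) (2 * t) t :=
    (hsq.const_add _).sub_const _
  have hY : HasDerivAt (fun s => 2 * R * s) (2 * R) t := by
    simpa using (hasDerivAt_id t).const_mul (2 * R)
  have hcos := hX.arccos_div hY (by positivity) (by linarith)
  have hroot := ((hY.pow 2).sub (hX.pow 2)).sqrt hheron.ne'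
  simp only [Pi.pow_apply, Pi.sub_apply] at hroot
  have hsin := ((hsq.sub_const (R ^ 2)).sub_const (r_c ^ 2)).arcsin_div
    (hasDerivAt_const t (2 * R * r_c)) (by positivity) (by linarith)
  refine (((hsq.mul hcos).sub (hroot.div_const 2)).add (hsin.const_mul (r_c ^ 2))).congr_deriv ?_
  rw [show (2 * R * r_c) ^ 2 - (t ^ 2 - R ^ 2 - r_c ^ 2) ^ 2 =
    (2 * R * t) ^ 2 - (R ^ 2 + t ^ 2 - r_c ^ 2) ^ 2 by ring]
  field_simp
  ring

lemma continuousOn_cosine_law {r_c R : ℝ} (hR0 : 0 < R) (hR : R ≤ r_c) :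
    ContinuousOn (fun t => (R ^ 2 + t ^ 2 - r_c ^ 2) / (2 * R * t)) (Icc (r_c - R) (R + r_c)) := by
  rcases hR.eq_or_lt with rfl | hlt
  -- the left endpoint is then `0`, where `0 / 0 = 0` makes the quotient agree with `t / (2 R)`
  · have hlin : (fun t => (R ^ 2 + t ^ 2 - R ^ 2) / (2 * R * t)) = fun t => t / (2 * R) := by
      funext t
      rcases eq_or_ne t 0 with rfl | ht
      · simp
      · field_simp
        ring
    rw [hlin]
    fun_prop
  · refine ContinuousOn.div (by fun_prop) (by fun_prop) fun t ht => ?_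
    have : 0 < t := by linarith [ht.1]
    positivity

lemma continuousOn_arcLengthPrimitive {r_c R : ℝ} (hR0 : 0 < R) (hR : R ≤ r_c) :
    ContinuousOn (arcLengthPrimitive r_c R) (Icc (r_c - R) (R + r_c)) :=
  (((continuousOn_pow 2).mul (continuous_arccos.comp_continuousOn
    (continuousOn_cosine_law hR0 hR))).sub (by fun_prop)).add (by fun_prop)

lemma arcLengthPrimitive_add {r_c R : ℝ} (hR0 : 0 < R) (hrc : 0 < r_c) :
    arcLengthPrimitive r_c R (R + r_c) = π / 2 * r_c ^ 2 := by
  have hu : (R ^ 2 + (R + r_c) ^ 2 - r_c ^ 2) / (2 * R * (R + r_c)) = 1 := by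
    rw [div_eq_one_iff_eq (by positivity)]; ring
  have hv : ((R + r_c) ^ 2 - R ^ 2 - r_c ^ 2) / (2 * R * r_c) = 1 := by
    rw [div_eq_one_iff_eq (by positivity)]; ring
  have hg : (2 * R * (R + r_c)) ^ 2 - (R ^ 2 + (R + r_c) ^ 2 - r_c ^ 2) ^ 2 = 0 := by ring
  rw [arcLengthPrimitive, hu, hv, hg, arccos_one, arcsin_one, sqrt_zero]
  ring

lemma arcLengthPrimitive_sub {r_c R : ℝ} (hR0 : 0 < R) (hrc : 0 < r_c) :
    arcLengthPrimitive r_c R (r_c - R) = π * (r_c - R) ^ 2 - π / 2 * r_c ^ 2 := by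
  have harccos : (r_c - R) ^ 2 * arccos ((R ^ 2 + (r_c - R) ^ 2 - r_c ^ 2) / (2 * R * (r_c - R))) =
      π * (r_c - R) ^ 2 := by
    rcases eq_or_ne (r_c - R) 0 with h | h
    · simp [h]
    · rw [show (R ^ 2 + (r_c - R) ^ 2 - r_c ^ 2) / (2 * R * (r_c - R)) = -1 by
        rw [div_eq_iff (by positivity)]; ring, arccos_neg_one, mul_comm]
  have hv : ((r_c - R) ^ 2 - R ^ 2 - r_c ^ 2) / (2 * R * r_c) = -1 := by
    rw [div_eq_iff (by positivity)]; ring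
  have hg : (2 * R * (r_c - R)) ^ 2 - (R ^ 2 + (r_c - R) ^ 2 - r_c ^ 2) ^ 2 = 0 := by ring
  rw [arcLengthPrimitive, harccos, hv, hg, arcsin_neg_one, sqrt_zero]
  ring

/-- Normalization of the density in the paper's Lemma 1, case `R ≤ r_c`:
`∫_{r_c−R}^{R+r_c} 2r · arccos((R² + r² − r_c²)/(2 R r)) dr = π r_c² − π (r_c − R)²`. -/
theorem lemma1_density_normalization_R_le_rc (r_c R : ℝ) (hR0 : 0 < R) (hR : R ≤ r_c) :
    ∫ r in (r_c - R)..(R + r_c),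
      2 * r * Real.arccos ((R ^ 2 + r ^ 2 - r_c ^ 2) / (2 * R * r)) =
      π * r_c ^ 2 - π * (r_c - R) ^ 2 := by
  have hle : r_c - R ≤ R + r_c := by linarith
  have hint : IntervalIntegrable (fun r => 2 * r * arccos ((R ^ 2 + r ^ 2 - r_c ^ 2) / (2 * R * r)))
      MeasureTheory.volume (r_c - R) (R + r_c) :=
    (ContinuousOn.mul (by fun_prop) (continuous_arccos.comp_continuousOn
      (continuousOn_cosine_law hR0 hR))).intervalIntegrable_of_Icc hle
  rw [intervalIntegral.integral_eq_sub_of_hasDerivAt_of_le hle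
      (continuousOn_arcLengthPrimitive hR0 hR) (fun r hr => hasDerivAt_arcLengthPrimitive hR0 hR hr)
      hint, arcLengthPrimitive_add hR0 (hR0.trans_le hR), arcLengthPrimitive_sub hR0 (hR0.trans_le hR)]
  ring
end
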